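/- Let f be a holomorphic function on (ℂˣ)ⁿ := {z ∈ ℂⁿ : zᵢ ≠ 0 for all i} that is not identically zero. Then f does not vanish identically on any nonempty open subset of 𝕊₁ⁿ (in the subspace topology of 𝕊₁ⁿ); i.e., there is no nonempty open subset O of 𝕊₁ⁿ with f(z) = 0 for all z ∈ O. -/

import Mathlib

open scoped BigOperators

noncomputable section

/-- Laurent polynomials in `n` variables over `ℂ`, given by finitely supported
coefficient functions on the exponent lattice `ℤⁿ`. -/
abbrev LaurentPoly (n : ℕ) : Type := (Fin n → ℤ) →₀ ℂ

/-- Evaluation of a Laurent polynomial at a point of the torus `(ℂˣ)ⁿ`. -/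
def LaurentPoly.eval {n : ℕ} (p : LaurentPoly n) (w : Fin n → ℂˣ) : ℂ :=
  ∑ k ∈ p.support, p k * ∏ i, ((w i : ℂ) ^ (k i))

/-- The Zariski topology on the torus `(ℂˣ)ⁿ`: generated by complements of
zero sets of Laurent polynomials. -/
def zariskiTorus (n : ℕ) : TopologicalSpace (Fin n → ℂˣ) :=
  TopologicalSpace.generateFrom
    {U | ∃ p : LaurentPoly n, U = {w | LaurentPoly.eval p w ≠ 0}}

/-- An algebraic subvariety of `(ℂˣ)ⁿ`: the common zero set of finitely many
Laurent polynomials. -/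
def IsSubvariety {n : ℕ} (W : Set (Fin n → ℂˣ)) : Prop :=
  ∃ F : Finset (LaurentPoly n), W = {w | ∀ p ∈ F, LaurentPoly.eval p w = 0}

/-- An irreducible algebraic subvariety of `(ℂˣ)ⁿ`. -/
def IsIrrSubvariety {n : ℕ} (W : Set (Fin n → ℂˣ)) : Prop :=
  IsSubvariety W ∧ @IsIrreducible _ (zariskiTorus n) W

/-- A `ℚ`-linear subspace of `ℂⁿ`: a `ℂ`-subspace spanned by vectors with
rational coordinates. -/
def IsQLinear {n : ℕ} (Q : Submodule ℂ (Fin n → ℂ)) : Prop :=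
  ∃ S : Set (Fin n → ℚ), Q = Submodule.span ℂ ((fun v => fun i => ((v i : ℚ) : ℂ)) '' S)

/-- A `ℂ`-linear subspace of `ℂⁿ` defined over `ℝ`: spanned over `ℂ` by vectors
with real coordinates. -/
def IsRealDefined {n : ℕ} (L : Submodule ℂ (Fin n → ℂ)) : Prop :=
  ∃ S : Set (Fin n → ℝ), L = Submodule.span ℂ ((fun v => fun i => ((v i : ℝ) : ℂ)) '' S)

/-- The coordinatewise exponential map `ℂⁿ → (ℂˣ)ⁿ`. -/
def expMap {n : ℕ} (z : Fin n → ℂ) : Fin n → ℂˣ :=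
  fun i => Units.mk0 (Complex.exp (z i)) (Complex.exp_ne_zero _)

/-- The subgroup `exp(Q)` of `(ℂˣ)ⁿ`, for `Q` a subspace of `ℂⁿ`. -/
def expSubgroup {n : ℕ} (Q : Submodule ℂ (Fin n → ℂ)) : Subgroup (Fin n → ℂˣ) where
  carrier := expMap '' (Q : Set (Fin n → ℂ))
  one_mem' := ⟨0, Q.zero_mem, by ext i; simp [expMap]⟩
  mul_mem' := by
    rintro _ _ ⟨a, ha, rfl⟩ ⟨b, hb, rfl⟩
    exact ⟨a + b, Q.add_mem ha hb, by ext i; simp [expMap, Complex.exp_add]⟩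
  inv_mem' := by
    rintro _ ⟨a, ha, rfl⟩
    exact ⟨-a, Q.neg_mem ha, by ext i; simp [expMap, Complex.exp_neg]⟩

/-- A subset `V ⊆ ℂⁿ × (ℂˣ)ⁿ` is additively free if its projection to `ℂⁿ` is not
contained in any translate of a proper `ℚ`-linear subspace of `ℂⁿ`. -/
def AdditivelyFree {n : ℕ} (V : Set ((Fin n → ℂ) × (Fin n → ℂˣ))) : Prop :=
  ∀ (a : Fin n → ℂ) (Q : Submodule ℂ (Fin n → ℂ)), IsQLinear Q → Q ≠ ⊤ →
    ¬ (Prod.fst '' V ⊆ {z | z - a ∈ Q})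

/-- Regular functions on `ℂⁿ × (ℂˣ)ⁿ`: polynomials in the first `n` variables and
Laurent polynomials in the last `n` variables. -/
abbrev PolyLaurent (n : ℕ) : Type := (Fin n → ℤ) →₀ MvPolynomial (Fin n) ℂ

/-- Evaluation of a regular function on `ℂⁿ × (ℂˣ)ⁿ`. -/
def PolyLaurent.eval {n : ℕ} (p : PolyLaurent n)
    (zw : (Fin n → ℂ) × (Fin n → ℂˣ)) : ℂ :=
  ∑ k ∈ p.support, MvPolynomial.eval zw.1 (p k) * ∏ i, ((zw.2 i : ℂ) ^ (k i))

/-- The Zariski topology on `ℂⁿ × (ℂˣ)ⁿ`. -/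
def zariskiProd (n : ℕ) : TopologicalSpace ((Fin n → ℂ) × (Fin n → ℂˣ)) :=
  TopologicalSpace.generateFrom
    {U | ∃ p : PolyLaurent n, U = {zw | PolyLaurent.eval p zw ≠ 0}}

/-- The quotient map `π_Q : ℂⁿ × (ℂˣ)ⁿ → (ℂⁿ/Q) × ((ℂˣ)ⁿ/exp(Q))`. -/
def piQ {n : ℕ} (Q : Submodule ℂ (Fin n → ℂ)) :
    (Fin n → ℂ) × (Fin n → ℂˣ) →
      ((Fin n → ℂ) ⧸ Q) × ((Fin n → ℂˣ) ⧸ expSubgroup Q) :=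
  fun p => (Submodule.Quotient.mk p.1, QuotientGroup.mk p.2)

/-- The Zariski topology on the quotient `(ℂⁿ/Q) × ((ℂˣ)ⁿ/exp(Q))`, coinduced
along `π_Q` from the Zariski topology on `ℂⁿ × (ℂˣ)ⁿ`. -/
def zariskiQuot {n : ℕ} (Q : Submodule ℂ (Fin n → ℂ)) :
    TopologicalSpace (((Fin n → ℂ) ⧸ Q) × ((Fin n → ℂˣ) ⧸ expSubgroup Q)) :=
  (zariskiProd n).coinduced (piQ Q)

/-- The dimension of a subset `S` of a topological space: the topological Krull
dimension of `S` with the subspace topology. -/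
def zdim {α : Type*} (t : TopologicalSpace α) (S : Set α) : WithBot ℕ∞ :=
  @topologicalKrullDim S (TopologicalSpace.induced Subtype.val t)

/-- `V ⊆ ℂⁿ × (ℂˣ)ⁿ` is rotund if for every `ℚ`-linear subspace `Q ≤ ℂⁿ`, the
dimension of the Zariski closure of `π_Q(V)` is at least `n - dim Q`. -/
def Rotund {n : ℕ} (V : Set ((Fin n → ℂ) × (Fin n → ℂˣ))) : Prop :=
  ∀ Q : Submodule ℂ (Fin n → ℂ), IsQLinear Q →
    (((n - Module.finrank ℂ Q : ℕ) : ℕ∞) : WithBot ℕ∞) ≤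
      zdim (zariskiQuot Q) (@closure _ (zariskiQuot Q) (piQ Q '' V))

/-- The `δ`-map of a subvariety of `ℂⁿ × (ℂˣ)ⁿ`: `(z, w) ↦ w · exp(-z)`. -/
def deltaMap {n : ℕ} : ((Fin n → ℂ) × (Fin n → ℂˣ)) → (Fin n → ℂˣ) :=
  fun p => fun i => p.2 i * (expMap p.1 i)⁻¹

/-- The `δ`-map of `V` is open at `p ∈ V` if there is an open neighbourhood of `p`
in `V` (subspace topology, standard/Euclidean) on which `δ` restricts to an open
map into `(ℂˣ)ⁿ`. -/
def DeltaOpenAt {n : ℕ} (V : Set ((Fin n → ℂ) × (Fin n → ℂˣ)))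
    (p : (Fin n → ℂ) × (Fin n → ℂˣ)) : Prop :=
  ∃ N : Set ((Fin n → ℂ) × (Fin n → ℂˣ)), IsOpen N ∧ p ∈ N ∧
    ∀ O : Set ((Fin n → ℂ) × (Fin n → ℂˣ)), IsOpen O →
      IsOpen (deltaMap '' (O ∩ N ∩ V))

/-- The map `Log : (ℂˣ)ⁿ → ℝⁿ`, `w ↦ (log |w₁|, …, log |wₙ|)`. -/
def torusLog {n : ℕ} (w : Fin n → ℂˣ) : Fin n → ℝ :=
  fun i => Real.log ‖(w i : ℂ)‖

/-- The amoeba of `W ⊆ (ℂˣ)ⁿ`: the image of `W` under `Log`. -/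
def amoeba {n : ℕ} (W : Set (Fin n → ℂˣ)) : Set (Fin n → ℝ) :=
  torusLog '' W

/-- The coordinatewise real part of a subset of `ℂⁿ`. -/
def rePart {n : ℕ} (L : Set (Fin n → ℂ)) : Set (Fin n → ℝ) :=
  (fun z => fun i => (z i).re) '' L

/-- The unit polycircle `𝕊₁ⁿ ⊆ (ℂˣ)ⁿ`. -/
def unitTorus (n : ℕ) : Set (Fin n → ℂˣ) :=
  {w | ∀ i, ‖(w i : ℂ)‖ = 1}

/-- `S` is Zariski-dense in `W` if every Laurent polynomial vanishing on `S`
vanishes identically on `W`. -/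
def ZariskiDenseIn {n : ℕ} (S W : Set (Fin n → ℂˣ)) : Prop :=
  ∀ p : LaurentPoly n, (∀ w ∈ S, LaurentPoly.eval p w = 0) →
    ∀ w ∈ W, LaurentPoly.eval p w = 0

/-- The linear functional `z ↦ k₁z₁ + … + kₙzₙ` attached to `k ∈ ℤⁿ`. -/
def intFunctional {n : ℕ} (k : Fin n → ℤ) : Module.Dual ℂ (Fin n → ℂ) :=
  ∑ i, (k i : ℂ) • (LinearMap.proj i : (Fin n → ℂ) →ₗ[ℂ] ℂ)

/-- The Newton polytope of a Laurent polynomial, as a subset of the dual space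
`(ℂⁿ)^∨` regarded as a real vector space. -/
def newtonPolytope {n : ℕ} (p : LaurentPoly n) : Set (Module.Dual ℂ (Fin n → ℂ)) :=
  convexHull ℝ (intFunctional '' (p.support : Set (Fin n → ℤ)))

/-- Finite subsets `A₁, …, A_d` of a `ℂ`-vector space satisfy the Rado property if
there is a basis `v₁, …, v_d` of the space with `vⱼ ∈ Aⱼ` for each `j`. -/
def RadoProperty {d : ℕ} {V : Type*} [AddCommGroup V] [Module ℂ V]
    (A : Fin d → Set V) : Prop :=
  ∃ v : Fin d → V, (∀ j, v j ∈ A j) ∧ LinearIndependent ℂ v ∧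
    Submodule.span ℂ (Set.range v) = ⊤

/-! Restricted to a line parallel to a coordinate axis, `f` is holomorphic on `ℂˣ`, which is
connected, and a relatively open piece of the unit circle accumulates at each of its points. So the
one-variable identity theorem frees the coordinates one at a time: `f` vanishes on
`(𝕊₁ ∩ V₁) × ⋯ × (𝕊₁ ∩ Vₙ)`, then on `ℂˣ × (𝕊₁ ∩ V₂) × ⋯`, and finally on all of `(ℂˣ)ⁿ`. -/

open Set Filter Topology Metric Function

theorem DifferentiableOn.eqOn_zero_of_accPt {D T : Set ℂ} {g : ℂ → ℂ}
    (hg : DifferentiableOn ℂ g D) (hDo : IsOpen D) (hDc : IsPreconnected D) {c : ℂ}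
    (hc : c ∈ D) (hT : AccPt c (𝓟 T)) (h : EqOn g 0 (T ∩ D)) : EqOn g 0 D := by
  have hfreq : ∃ᶠ w in 𝓝[≠] c, g w = 0 :=
    ((accPt_iff_frequently_nhdsNE.mp hT).and_eventually
      (nhdsWithin_le_nhds (hDo.mem_nhds hc))).mono fun w hw => h hw
  exact (hg.analyticOnNhd hDo).eqOn_zero_of_preconnected_of_frequently_eq_zero hDc hc hfreq

theorem DifferentiableOn.eqOn_zero_univ_pi {ι : Type*} [Fintype ι] {D T : ι → Set ℂ}
    {f : (ι → ℂ) → ℂ} (hf : DifferentiableOn ℂ f (univ.pi D)) (hDo : ∀ i, IsOpen (D i))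
    (hDc : ∀ i, IsPreconnected (D i)) (hT : ∀ i, ∃ c ∈ D i, AccPt c (𝓟 (T i)))
    (h : EqOn f 0 (univ.pi T)) : EqOn f 0 (univ.pi D) := by
  classical
  suffices key : ∀ s : Finset ι, ∀ z ∈ univ.pi D, (∀ i ∉ s, z i ∈ T i) → f z = 0 from
    fun z hz => key Finset.univ z hz fun i hi => absurd (Finset.mem_univ i) hi
  intro s
  induction s using Finset.induction_on with
  | empty => exact fun z _ hzT => h fun i _ => hzT i (Finset.notMem_empty i)
  | insert j s _ ih =>
    intro z hzD hzT
    have hupd : MapsTo (update z j) (D j) (univ.pi D) := fun w hw =>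
      (update_mem_pi_iff_of_mem hzD).mpr fun _ => hw
    have hg : DifferentiableOn ℂ (fun w => f (update z j w)) (D j) :=
      hf.comp (fun w _ => (hasFDerivAt_update z w).differentiableAt.differentiableWithinAt) hupd
    obtain ⟨c, hc, hcT⟩ := hT j
    have hzero : EqOn (fun w => f (update z j w)) 0 (T j ∩ D j) := by
      rintro w ⟨hwT, hwD⟩
      refine ih _ (hupd hwD) fun i hi => ?_
      rcases eq_or_ne i j with rfl | hij
      · simpa using hwT
      · simpa [hij] using hzT i (by simp [hij, hi])
    simpa using hg.eqOn_zero_of_accPt (hDo j) (hDc j) hc hcT hzero (hzD j trivial)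

theorem preperfect_sphere_zero_one : Preperfect (sphere (0 : ℂ) 1) :=
  (isPreconnected_sphere (by simp) 0 1).preperfect_of_nontrivial
    ⟨1, by simp, -1, by simp, by norm_num⟩

/-- A holomorphic function on `(ℂˣ)ⁿ` (as an open subset of `ℂⁿ`) that is
not identically zero does not vanish identically on any nonempty relatively open subset
of the unit polycircle `𝕊₁ⁿ`. -/
theorem stmt_15 {n : ℕ} (f : (Fin n → ℂ) → ℂ)
    (hf : DifferentiableOn ℂ f {z : Fin n → ℂ | ∀ i, z i ≠ 0})
    (hne : ∃ z ∈ {z : Fin n → ℂ | ∀ i, z i ≠ 0}, f z ≠ 0) :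
    ∀ U : Set (Fin n → ℂ), IsOpen U →
      ({z : Fin n → ℂ | ∀ i, ‖z i‖ = 1} ∩ U).Nonempty →
      ∃ z ∈ {z : Fin n → ℂ | ∀ i, ‖z i‖ = 1} ∩ U, f z ≠ 0 := by
  rintro U hU ⟨ζ, hζ, hζU⟩
  by_contra! hzero
  obtain ⟨ε, hε, hball⟩ := Metric.isOpen_iff.mp hU ζ hζU
  have htorus : {z : Fin n → ℂ | ∀ i, z i ≠ 0} = univ.pi fun _ => {0}ᶜ := by ext; simp
  have hacc (i : Fin n) : AccPt (ζ i) (𝓟 (ball (ζ i) ε ∩ sphere 0 1)) :=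
    preperfect_sphere_zero_one.open_inter isOpen_ball (ζ i)
      ⟨mem_ball_self hε, mem_sphere_zero_iff_norm.mpr (hζ i)⟩
  have hvanish : EqOn f 0 (univ.pi fun i => ball (ζ i) ε ∩ sphere 0 1) := fun z hz =>
    hzero z ⟨fun i => mem_sphere_zero_iff_norm.mp (hz i trivial).2,
      hball ((ball_pi ζ hε).symm ▸ fun i _ => (hz i trivial).1)⟩
  obtain ⟨z, hz, hfz⟩ := hne
  rw [htorus] at hf hz
  exact hfz (hf.eqOn_zero_univ_pi (fun _ => isOpen_compl_singleton)
    (fun _ => (isConnected_compl_singleton_of_one_lt_rank (by simp) 0).isPreconnected)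
    (fun i => ⟨ζ i, norm_ne_zero_iff.mp ((hζ i).symm ▸ one_ne_zero), hacc i⟩) hvanish hz)
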